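/- Chain expression identity: let T be a read-once expression tree over Fin n with at least one internal node and let C be its root chain. If C is an addition–subtraction chain with positively occurring chain terms t_1, …, t_m and negatively occurring chain terms t'_1, …, t'_k, then val T = (val t_1 + ⋯ + val t_m) − (val t'_1 + ⋯ + val t'_k). If C is a multiplication–division chain with non-inverted chain terms s_1, …, s_m and inverted chain terms s'_1, …, s'_k, then val T = (val s_1 ⋯ val s_m) / (val s'_1 ⋯ val s'_k). -/
import Mathlib


/-- The four binary arithmetic operations labeling internal nodes. -/
inductive Op : Type
  | add | sub | mul | div
deriving DecidableEq, Repr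

/-- An expression tree over variables `Fin n`: a full binary tree whose leaves
are labeled by variables and whose internal nodes carry an operation. -/
inductive ETree (n : ℕ) : Type
  | leaf (v : Fin n)
  | node (op : Op) (l r : ETree n)
deriving DecidableEq

/-- The field of rational functions in `n` variables over `ℚ`. -/
abbrev K (n : ℕ) := FractionRing (MvPolynomial (Fin n) ℚ)

/-- The list of variables labeling the leaves, from left to right. -/
def leafList {n : ℕ} : ETree n → List (Fin n)
  | .leaf v => [v]
  | .node _ l r => leafList l ++ leafList r

/-- A tree is read-once (a *valid* expression) if each variable labels at most one leaf. -/
def ReadOnce {n : ℕ} (T : ETree n) : Prop := (leafList T).Nodup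

/-- The set of variables labeling leaves of a tree. -/
def leafVars {n : ℕ} (T : ETree n) : Finset (Fin n) := (leafList T).toFinset

/-- The value of an expression tree in the field of rational functions. -/
noncomputable def val {n : ℕ} : ETree n → K n
  | .leaf v => algebraMap (MvPolynomial (Fin n) ℚ) (K n) (MvPolynomial.X v)
  | .node .add l r => val l + val r
  | .node .sub l r => val l - val r
  | .node .mul l r => val l * val r
  | .node .div l r => val l / val r

/-- The chain terms of the root addition–subtraction chain of a tree, split into the
positively occurring and the negatively occurring terms.  (If the root is not labeled
`+` or `−`, the tree is its own single positive term.)  A term hung below the right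
child of a subtraction node of the chain has its sign flipped. -/
def asChainTerms {n : ℕ} : ETree n → List (ETree n) × List (ETree n)
  | .node .add l r =>
      ((asChainTerms l).1 ++ (asChainTerms r).1, (asChainTerms l).2 ++ (asChainTerms r).2)
  | .node .sub l r =>
      ((asChainTerms l).1 ++ (asChainTerms r).2, (asChainTerms l).2 ++ (asChainTerms r).1)
  | t => ([t], [])

/-- The chain terms of the root multiplication–division chain of a tree, split into the
non-inverted and the inverted terms.  (If the root is not labeled `×` or `÷`, the tree
is its own single non-inverted term.) -/
def mdChainTerms {n : ℕ} : ETree n → List (ETree n) × List (ETree n)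
  | .node .mul l r =>
      ((mdChainTerms l).1 ++ (mdChainTerms r).1, (mdChainTerms l).2 ++ (mdChainTerms r).2)
  | .node .div l r =>
      ((mdChainTerms l).1 ++ (mdChainTerms r).2, (mdChainTerms l).2 ++ (mdChainTerms r).1)
  | t => ([t], [])

lemma key {n : ℕ} (t : ETree n) :
    (val t = ((asChainTerms t).1.map val).sum - ((asChainTerms t).2.map val).sum) ∧
    (val t = ((mdChainTerms t).1.map val).prod / ((mdChainTerms t).2.map val).prod) := by
  induction t with
  | leaf v => simp [asChainTerms, mdChainTerms, val]
  | node op l r ihl ihr =>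
    obtain ⟨al, ml⟩ := ihl
    obtain ⟨ar, mr⟩ := ihr
    cases op with
    | add =>
      constructor
      · simp only [asChainTerms, val, List.map_append, List.sum_append]
        rw [al, ar]; ring
      · simp [mdChainTerms, val]
    | sub =>
      constructor
      · simp only [asChainTerms, val, List.map_append, List.sum_append]
        rw [al, ar]; ring
      · simp [mdChainTerms, val]
    | mul =>
      constructor
      · simp [asChainTerms, val]
      · simp only [mdChainTerms, val, List.map_append, List.prod_append]
        rw [ml, mr, div_mul_div_comm]
    | div =>
      constructor
      · simp [asChainTerms, val]
      · simp only [mdChainTerms, val, List.map_append, List.prod_append]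
        rw [ml, mr, div_div_eq_mul_div, div_mul_eq_mul_div, div_div]

/-- Chain expression identity: for a read-once tree with at least one internal node,
if the root chain is an addition–subtraction chain then the value of the tree is the
sum of the values of the positive chain terms minus the sum of the values of the
negative chain terms; if the root chain is a multiplication–division chain then the
value is the product of the values of the non-inverted chain terms divided by the
product of the values of the inverted chain terms. -/
theorem val_eq_chain_expression (n : ℕ) (T : ETree n) (hT : ReadOnce T)
    (op : Op) (l r : ETree n) (hnode : T = .node op l r) :
    ((op = Op.add ∨ op = Op.sub) →
      val T = ((asChainTerms T).1.map val).sum - ((asChainTerms T).2.map val).sum) ∧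
    ((op = Op.mul ∨ op = Op.div) →
      val T = ((mdChainTerms T).1.map val).prod / ((mdChainTerms T).2.map val).prod) := by
  refine ⟨fun _ => (key T).1, fun _ => (key T).2⟩
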